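/- Let Y_1, …, Y_n ∈ ℝ^p be vectors with sample mean Ȳ = (Y_1 + ⋯ + Y_n)/n, let μ ∈ ℝ^p, and suppose κ_p is a constant such that z ↦ (z zᵀ)^{1/2} is κ_p-Lipschitz on ℝ^p with respect to the Frobenius norm. Define Ω̆ = ( (1/n) Σ_{i=1}^n ((Y_i − Ȳ)(Y_i − Ȳ)ᵀ)^{1/2} )² and Ω̃ = ( (1/n) Σ_{i=1}^n ((Y_i − μ)(Y_i − μ)ᵀ)^{1/2} )². Then d_S(Ω̆, Ω̃) ≤ κ_p ‖Ȳ − μ‖. -/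

import Mathlib

open Matrix MeasureTheory ProbabilityTheory

noncomputable def eunorm {p : ℕ} (x : Fin p → ℝ) : ℝ := Real.sqrt (∑ i, x i ^ 2)

noncomputable def frob {p : ℕ} (M : Matrix (Fin p) (Fin p) ℝ) : ℝ :=
  Real.sqrt (∑ i, ∑ j, M i j ^ 2)

open Classical in
noncomputable def msqrt {p : ℕ} (A : Matrix (Fin p) (Fin p) ℝ) : Matrix (Fin p) (Fin p) ℝ :=
  if h : A.PosSemidef then
    h.1.eigenvectorUnitary.1 * diagonal (Real.sqrt ∘ h.1.eigenvalues) *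
      (star h.1.eigenvectorUnitary : Matrix (Fin p) (Fin p) ℝ) else 0

noncomputable def dS {p : ℕ} (A B : Matrix (Fin p) (Fin p) ℝ) : ℝ := frob (msqrt A - msqrt B)

noncomputable def mExp {p : ℕ} {Ωs : Type*} [MeasurableSpace Ωs] (μ : Measure Ωs)
    (F : Ωs → Matrix (Fin p) (Fin p) ℝ) : Matrix (Fin p) (Fin p) ℝ :=
  Matrix.of fun i j => ∫ ω, F ω i j ∂μ

noncomputable def covDS {p : ℕ} {Ωs : Type*} [MeasurableSpace Ωs] (μ : Measure Ωs)
    (Y : Ωs → Fin p → ℝ) : Matrix (Fin p) (Fin p) ℝ :=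
  (mExp μ fun ω => msqrt (vecMulVec (Y ω - fun r => ∫ ω', Y ω' r ∂μ) (Y ω - fun r => ∫ ω', Y ω' r ∂μ))) *
  (mExp μ fun ω => msqrt (vecMulVec (Y ω - fun r => ∫ ω', Y ω' r ∂μ) (Y ω - fun r => ∫ ω', Y ω' r ∂μ)))

/-! Since `S ↦ S * S` is inverted by `msqrt` on positive semidefinite matrices, `d_S(Ω̆, Ω̃)` is
the Frobenius norm of the average of `(z_i z_iᵀ)^{1/2} - (z_i' z_i'ᵀ)^{1/2}`, where `z_i = Y_i - Ȳ`
and `z_i' = Y_i - μ` differ by `μ - Ȳ` for every `i`; the Lipschitz bound on each term passes to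
the average. -/

attribute [local instance] Matrix.frobeniusNormedAddCommGroup Matrix.frobeniusNormedSpace

open scoped MatrixOrder

lemma frob_eq_norm {p : ℕ} (M : Matrix (Fin p) (Fin p) ℝ) : frob M = ‖M‖ := by
  rw [frob, frobenius_norm_def, Real.sqrt_eq_rpow]
  simp

lemma eunorm_sub_comm {p : ℕ} (a b : Fin p → ℝ) : eunorm (a - b) = eunorm (b - a) := by
  rw [eunorm, eunorm, ← neg_sub b a]
  simp only [Pi.neg_apply, neg_sq]

lemma msqrt_eq_sqrt {p : ℕ} {A : Matrix (Fin p) (Fin p) ℝ} (hA : A.PosSemidef) :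
    msqrt A = CFC.sqrt A := by
  rw [msqrt, dif_pos hA, CFC.sqrt_eq_real_sqrt _ hA.nonneg, cfcₙ_eq_cfc, hA.1.cfc_eq,
    IsHermitian.cfc, Unitary.conjStarAlgAut_apply]
  rfl

lemma posSemidef_msqrt_vecMulVec {p : ℕ} (z : Fin p → ℝ) :
    (msqrt (vecMulVec z z)).PosSemidef := by
  have hz : (vecMulVec z z).PosSemidef := by simpa using posSemidef_vecMulVec_self_star z
  rw [msqrt_eq_sqrt hz, ← nonneg_iff_posSemidef]
  exact CFC.sqrt_nonneg _

lemma msqrt_mul_self {p : ℕ} {S : Matrix (Fin p) (Fin p) ℝ} (hS : S.PosSemidef) :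
    msqrt (S * S) = S := by
  rw [msqrt_eq_sqrt (by simpa [sq] using hS.pow 2), CFC.sqrt_mul_self _ hS.nonneg]

lemma norm_inv_card_smul_sum_le {ι E : Type*} [Fintype ι] [SeminormedAddCommGroup E]
    [NormedSpace ℝ E] {v : ι → E} {C : ℝ} (hC : 0 ≤ C) (hv : ∀ i, ‖v i‖ ≤ C) :
    ‖(Fintype.card ι : ℝ)⁻¹ • ∑ i, v i‖ ≤ C := by
  rcases isEmpty_or_nonempty ι with _ | _
  · simpa using hC
  have hcard : (0 : ℝ) < Fintype.card ι := by exact_mod_cast Fintype.card_pos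
  calc ‖(Fintype.card ι : ℝ)⁻¹ • ∑ i, v i‖
      ≤ (Fintype.card ι : ℝ)⁻¹ * ∑ _i : ι, C := by
        rw [norm_smul, Real.norm_of_nonneg (by positivity)]
        gcongr
        exact norm_sum_le_of_le _ fun i _ => hv i
    _ = C := by simp [field]

theorem stmt7_general {p : ℕ} (κ : ℝ)
    (hκ : ∀ z z' : Fin p → ℝ,
      frob (msqrt (vecMulVec z z) - msqrt (vecMulVec z' z')) ≤ κ * eunorm (z - z'))
    {n : ℕ} (Y : Fin n → Fin p → ℝ) (μv : Fin p → ℝ)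
    (Ybar : Fin p → ℝ)
    (Ωbreve Ωtilde : Matrix (Fin p) (Fin p) ℝ)
    (hΩbreve : Ωbreve =
      ((n : ℝ)⁻¹ • ∑ i, msqrt (vecMulVec (Y i - Ybar) (Y i - Ybar))) *
      ((n : ℝ)⁻¹ • ∑ i, msqrt (vecMulVec (Y i - Ybar) (Y i - Ybar))))
    (hΩtilde : Ωtilde =
      ((n : ℝ)⁻¹ • ∑ i, msqrt (vecMulVec (Y i - μv) (Y i - μv))) *
      ((n : ℝ)⁻¹ • ∑ i, msqrt (vecMulVec (Y i - μv) (Y i - μv)))) :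
    dS Ωbreve Ωtilde ≤ κ * eunorm (Ybar - μv) := by
  have hmean : ∀ c : Fin p → ℝ,
      msqrt (((n : ℝ)⁻¹ • ∑ i, msqrt (vecMulVec (Y i - c) (Y i - c))) *
        ((n : ℝ)⁻¹ • ∑ i, msqrt (vecMulVec (Y i - c) (Y i - c)))) =
      (n : ℝ)⁻¹ • ∑ i, msqrt (vecMulVec (Y i - c) (Y i - c)) := fun c =>
    msqrt_mul_self ((posSemidef_sum _ fun i _ => posSemidef_msqrt_vecMulVec _).smul
      (by positivity))
  have hκ_nonneg : 0 ≤ κ * eunorm (Ybar - μv) := by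
    simpa only [sub_zero] using (Real.sqrt_nonneg _).trans (hκ (Ybar - μv) 0)
  rw [dS, hΩbreve, hΩtilde, hmean, hmean, frob_eq_norm, ← smul_sub, ← Finset.sum_sub_distrib]
  have hterm : ∀ i, ‖msqrt (vecMulVec (Y i - Ybar) (Y i - Ybar)) -
      msqrt (vecMulVec (Y i - μv) (Y i - μv))‖ ≤ κ * eunorm (Ybar - μv) := fun i => by
    rw [← frob_eq_norm, eunorm_sub_comm]
    simpa only [sub_sub_sub_cancel_left] using hκ (Y i - Ybar) (Y i - μv)
  simpa using norm_inv_card_smul_sum_le hκ_nonneg hterm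

/-- If `z ↦ (z zᵀ)^{1/2}` is `κ_p`-Lipschitz, then the sample `d_S`-covariance
computed with the sample mean `Ȳ` and the one computed with any `μ` satisfy
`d_S(Ω̆, Ω̃) ≤ κ_p ‖Ȳ − μ‖`. -/
theorem stmt7 {p : ℕ} (κ : ℝ)
    (hκ : ∀ z z' : Fin p → ℝ,
      frob (msqrt (vecMulVec z z) - msqrt (vecMulVec z' z')) ≤ κ * eunorm (z - z'))
    {n : ℕ} (hn : 0 < n) (Y : Fin n → Fin p → ℝ) (μv : Fin p → ℝ)
    (Ybar : Fin p → ℝ) (hYbar : Ybar = (n : ℝ)⁻¹ • ∑ i, Y i)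
    (Ωbreve Ωtilde : Matrix (Fin p) (Fin p) ℝ)
    (hΩbreve : Ωbreve =
      ((n : ℝ)⁻¹ • ∑ i, msqrt (vecMulVec (Y i - Ybar) (Y i - Ybar))) *
      ((n : ℝ)⁻¹ • ∑ i, msqrt (vecMulVec (Y i - Ybar) (Y i - Ybar))))
    (hΩtilde : Ωtilde =
      ((n : ℝ)⁻¹ • ∑ i, msqrt (vecMulVec (Y i - μv) (Y i - μv))) *
      ((n : ℝ)⁻¹ • ∑ i, msqrt (vecMulVec (Y i - μv) (Y i - μv)))) :
    dS Ωbreve Ωtilde ≤ κ * eunorm (Ybar - μv) :=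
  stmt7_general κ hκ Y μv Ybar Ωbreve Ωtilde hΩbreve hΩtilde
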